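/- Fix an integer n ≥ 1 and s ∈ (0,1). Let E₂ ⊆ E₁ ⊂ ℝⁿ be measurable sets (inclusion up to a Lebesgue-null set) and let x₀ ∈ ℝⁿ. Suppose that for i = 1,2 the fractional mean curvature H_s[E_i](x₀) := lim_{ρ→0⁺} ∫_{ℝⁿ∖B_ρ(x₀)} (χ_{ℝⁿ∖E_i}(y) − χ_{E_i}(y)) |y−x₀|^{−n−s} dy exists in ℝ, and that H_s[E₁](x₀) = H_s[E₂](x₀). Then |E₁ ∖ E₂| = 0. -/
import Mathlib


open MeasureTheory Filter
open scoped ENNReal NNReal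

noncomputable section

/-- The fractional kernel `|x - y| ^ (-n - s)`. -/
def fracKernel (n : ℕ) (s : ℝ) (x y : EuclideanSpace ℝ (Fin n)) : ℝ :=
  dist x y ^ (-(n : ℝ) - s)

/-- The cross-shaped domain `Q(Ω) = (ℝⁿ × ℝⁿ) \ (𝒞Ω × 𝒞Ω)`. -/
def crossQ (n : ℕ) (Ω : Set (EuclideanSpace ℝ (Fin n))) :
    Set (EuclideanSpace ℝ (Fin n) × EuclideanSpace ℝ (Fin n)) :=
  (Ωᶜ ×ˢ Ωᶜ)ᶜ

/-- The truncated fractional mean curvature `H_s^ρ[E](x)`. -/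
def Hrho (n : ℕ) (s : ℝ) (E : Set (EuclideanSpace ℝ (Fin n)))
    (x : EuclideanSpace ℝ (Fin n)) (ρ : ℝ) : ℝ :=
  ∫ y in (Metric.ball x ρ)ᶜ,
    (Set.indicator Eᶜ (fun _ => (1 : ℝ)) y - Set.indicator E (fun _ => (1 : ℝ)) y) *
      fracKernel n s y x

/-- The fractional kernel is nonnegative. -/
lemma fracKernel_nonneg (n : ℕ) (s : ℝ) (x y : EuclideanSpace ℝ (Fin n)) :
    0 ≤ fracKernel n s x y :=
  Real.rpow_nonneg dist_nonneg _

lemma fracKernel_measurable (n : ℕ) (s : ℝ) (x : EuclideanSpace ℝ (Fin n)) :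
    Measurable (fun y => fracKernel n s y x) := by
  unfold fracKernel
  fun_prop

/-- Integrability of the kernel outside a ball. -/
lemma fracKernel_integrableOn (n : ℕ) (s : ℝ) (hs : 0 < s)
    (x₀ : EuclideanSpace ℝ (Fin n)) {ρ : ℝ} (hρ : 0 < ρ) :
    IntegrableOn (fun y => fracKernel n s y x₀) (Metric.ball x₀ ρ)ᶜ volume := by
  have hfin : (Module.finrank ℝ (EuclideanSpace ℝ (Fin n)) : ℝ) < (n : ℝ) + s := by
    rw [finrank_euclideanSpace_fin]; linarith
  have hint : Integrable (fun y : EuclideanSpace ℝ (Fin n) =>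
      (1 + ‖y - x₀‖) ^ (-((n : ℝ) + s))) volume :=
    (integrable_one_add_norm hfin).comp_sub_right x₀
  set C : ℝ := (ρ⁻¹ + 1) ^ ((n : ℝ) + s) with hC
  refine Integrable.mono' ((hint.const_mul C).integrableOn)
    ((fracKernel_measurable n s x₀).aestronglyMeasurable.restrict) ?_
  filter_upwards [ae_restrict_mem (measurableSet_ball.compl)] with y hy
  have hd : ρ ≤ dist y x₀ := by
    simpa [Metric.mem_ball, not_lt] using hy
  set d : ℝ := dist y x₀ with hdd
  have hdpos : 0 < d := lt_of_lt_of_le hρ hd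
  set a : ℝ := (n : ℝ) + s with ha
  have hns : (0 : ℝ) ≤ a := by positivity
  have h1 : 1 + d ≤ (ρ⁻¹ + 1) * d := by
    have h2 : (1 : ℝ) ≤ ρ⁻¹ * d := by
      rw [inv_mul_eq_div, le_div_iff₀ hρ, one_mul]; exact hd
    nlinarith
  have hpow : (1 + d) ^ a ≤ C * d ^ a := by
    calc (1 + d) ^ a ≤ ((ρ⁻¹ + 1) * d) ^ a :=
          Real.rpow_le_rpow (by positivity) h1 hns
      _ = C * d ^ a := Real.mul_rpow (by positivity) hdpos.le
  have hker : fracKernel n s y x₀ = (d ^ a)⁻¹ := by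
    rw [fracKernel, ← Real.rpow_neg dist_nonneg, ← hdd]
    rw [ha]; ring_nf
  have hnd : ‖y - x₀‖ = d := (dist_eq_norm y x₀).symm
  rw [Real.norm_of_nonneg (fracKernel_nonneg n s y x₀), hker, hnd,
    Real.rpow_neg (by positivity)]
  have p1 : (0 : ℝ) < d ^ a := Real.rpow_pos_of_pos hdpos a
  have p2 : (0 : ℝ) < (1 + d) ^ a := Real.rpow_pos_of_pos (by linarith) a
  rw [← one_div, ← one_div, mul_one_div, div_le_div_iff₀ p1 p2, one_mul]
  nlinarith [hpow]


lemma Hrho_integrand_integrableOn (n : ℕ) (s : ℝ) (hs : 0 < s)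
    (E : Set (EuclideanSpace ℝ (Fin n))) (hE : MeasurableSet E)
    (x₀ : EuclideanSpace ℝ (Fin n)) {ρ : ℝ} (hρ : 0 < ρ) :
    IntegrableOn (fun y =>
      (Set.indicator Eᶜ (fun _ => (1 : ℝ)) y - Set.indicator E (fun _ => (1 : ℝ)) y) *
        fracKernel n s y x₀) (Metric.ball x₀ ρ)ᶜ volume := by
  refine (fracKernel_integrableOn n s hs x₀ hρ).mono'
    ((((measurable_const.indicator hE.compl).sub
      (measurable_const.indicator hE)).mul
      (fracKernel_measurable n s x₀)).aestronglyMeasurable.restrict) ?_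
  refine Eventually.of_forall fun y => ?_
  rw [norm_mul, Real.norm_of_nonneg (fracKernel_nonneg n s y x₀)]
  refine mul_le_of_le_one_left (fracKernel_nonneg n s y x₀) ?_
  by_cases hy : y ∈ E <;>
    simp [Set.indicator_of_mem, Set.indicator_of_notMem, hy]

lemma indicator_mul_fracKernel_integrableOn (n : ℕ) (s : ℝ) (hs : 0 < s)
    (D : Set (EuclideanSpace ℝ (Fin n))) (hD : MeasurableSet D)
    (x₀ : EuclideanSpace ℝ (Fin n)) {ρ : ℝ} (hρ : 0 < ρ) :
    IntegrableOn (fun y =>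
      Set.indicator D (fun _ => (1 : ℝ)) y * fracKernel n s y x₀)
      (Metric.ball x₀ ρ)ᶜ volume := by
  refine (fracKernel_integrableOn n s hs x₀ hρ).mono'
    (((measurable_const.indicator hD).mul
      (fracKernel_measurable n s x₀)).aestronglyMeasurable.restrict) ?_
  refine Eventually.of_forall fun y => ?_
  rw [norm_mul, Real.norm_of_nonneg (fracKernel_nonneg n s y x₀)]
  refine mul_le_of_le_one_left (fracKernel_nonneg n s y x₀) ?_
  by_cases hy : y ∈ D <;>
    simp [Set.indicator_of_mem, Set.indicator_of_notMem, hy]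

theorem eq_of_fracMeanCurvature_eq (n : ℕ) (hn : 0 < n) (s : ℝ)
    (hs : s ∈ Set.Ioo (0 : ℝ) 1)
    (E₁ E₂ : Set (EuclideanSpace ℝ (Fin n))) (hE₁ : MeasurableSet E₁)
    (hE₂ : MeasurableSet E₂) (hsub : volume (E₂ \ E₁) = 0)
    (x₀ : EuclideanSpace ℝ (Fin n)) (h : ℝ)
    (h₁ : Tendsto (Hrho n s E₁ x₀) (nhdsWithin 0 (Set.Ioi 0)) (nhds h))
    (h₂ : Tendsto (Hrho n s E₂ x₀) (nhdsWithin 0 (Set.Ioi 0)) (nhds h)) :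
    volume (E₁ \ E₂) = 0 := by
  obtain ⟨hs0, hs1⟩ := hs
  set D := E₁ \ E₂ with hDdef
  have hDm : MeasurableSet D := hE₁.diff hE₂
  set g : ℝ → ℝ := fun ρ => ∫ y in (Metric.ball x₀ ρ)ᶜ,
      Set.indicator D (fun _ => (1 : ℝ)) y * fracKernel n s y x₀ with hgdef
  -- Step A: for ρ > 0, Hrho E₂ ρ - Hrho E₁ ρ = 2 * g ρ
  have stepA : ∀ ρ : ℝ, 0 < ρ → Hrho n s E₂ x₀ ρ - Hrho n s E₁ x₀ ρ = 2 * g ρ := by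
    intro ρ hρ
    have i₁ := Hrho_integrand_integrableOn n s hs0 E₁ hE₁ x₀ hρ
    have i₂ := Hrho_integrand_integrableOn n s hs0 E₂ hE₂ x₀ hρ
    rw [Hrho, Hrho, ← integral_sub i₂ i₁, hgdef, ← integral_const_mul]
    refine integral_congr_ae ?_
    have hnull : ∀ᵐ y ∂(volume.restrict (Metric.ball x₀ ρ)ᶜ), y ∉ E₂ \ E₁ :=
      ae_restrict_of_ae (by
        rw [ae_iff]
        convert hsub using 2
        ext a; simp [Set.mem_diff])
    filter_upwards [hnull] with y hy
    rw [Set.mem_diff] at hy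
    push_neg at hy
    by_cases h2 : y ∈ E₂
    · have h1 : y ∈ E₁ := hy h2
      have hyD : y ∉ D := fun hc => hc.2 h2
      rw [Set.indicator_of_notMem hyD, Set.indicator_of_notMem (Set.notMem_compl_iff.mpr h2),
        Set.indicator_of_mem h2, Set.indicator_of_notMem (Set.notMem_compl_iff.mpr h1),
        Set.indicator_of_mem h1]
      ring
    · by_cases h1 : y ∈ E₁
      · have hyD : y ∈ D := ⟨h1, h2⟩
        rw [Set.indicator_of_mem hyD, Set.indicator_of_mem (Set.mem_compl h2),
          Set.indicator_of_notMem h2, Set.indicator_of_notMem (Set.notMem_compl_iff.mpr h1),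
          Set.indicator_of_mem h1]
        ring
      · have hyD : y ∉ D := fun hc => h1 hc.1
        rw [Set.indicator_of_notMem hyD, Set.indicator_of_mem (Set.mem_compl h2),
          Set.indicator_of_notMem h2, Set.indicator_of_mem (Set.mem_compl h1),
          Set.indicator_of_notMem h1]
        ring
  -- g is nonneg
  have hg_nonneg : ∀ ρ : ℝ, 0 ≤ g ρ := fun ρ =>
    integral_nonneg fun y => mul_nonneg
      (Set.indicator_nonneg (fun _ _ => zero_le_one) y) (fracKernel_nonneg n s y x₀)
  -- g tends to 0
  have hg_tendsto : Tendsto g (nhdsWithin 0 (Set.Ioi 0)) (nhds 0) := by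
    have h0 : Tendsto (fun ρ => (Hrho n s E₂ x₀ ρ - Hrho n s E₁ x₀ ρ) / 2)
        (nhdsWithin 0 (Set.Ioi 0)) (nhds ((h - h) / 2)) := (h₂.sub h₁).div_const 2
    rw [sub_self, zero_div] at h0
    refine h0.congr' ?_
    filter_upwards [self_mem_nhdsWithin] with ρ hρ
    rw [stepA ρ hρ]; ring
  -- Step D: g ρ₀ = 0 for every ρ₀ > 0
  have stepD : ∀ ρ₀ : ℝ, 0 < ρ₀ → g ρ₀ = 0 := by
    intro ρ₀ hρ₀
    refine le_antisymm ?_ (hg_nonneg ρ₀)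
    refine ge_of_tendsto hg_tendsto ?_
    filter_upwards [Filter.inter_mem self_mem_nhdsWithin
      (nhdsWithin_le_nhds (Metric.ball_mem_nhds 0 hρ₀))] with ρ hρ
    obtain ⟨hρ1, hρ2⟩ := hρ
    have hρpos : 0 < ρ := hρ1
    have hρle : ρ ≤ ρ₀ := by
      have := mem_ball_iff_norm.mp hρ2
      rw [sub_zero] at this
      exact le_of_lt (lt_of_abs_lt this)
    simp only [hgdef]
    refine setIntegral_mono_set
      (indicator_mul_fracKernel_integrableOn n s hs0 D hDm x₀ hρpos)
      (Eventually.of_forall fun y => mul_nonneg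
        (Set.indicator_nonneg (fun _ _ => zero_le_one) y) (fracKernel_nonneg n s y x₀))
      (HasSubset.Subset.eventuallyLE
        (Set.compl_subset_compl.mpr (Metric.ball_subset_ball hρle)))
  -- Step E: D ∩ (ball x₀ ρ₀)ᶜ is null
  have stepE : ∀ ρ₀ : ℝ, 0 < ρ₀ → volume (D ∩ (Metric.ball x₀ ρ₀)ᶜ) = 0 := by
    intro ρ₀ hρ₀
    set F : EuclideanSpace ℝ (Fin n) → ℝ := fun y =>
      Set.indicator D (fun _ => (1 : ℝ)) y * fracKernel n s y x₀ with hF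
    have hFm : Measurable F :=
      (measurable_const.indicator hDm).mul (fracKernel_measurable n s x₀)
    have hFz : F =ᵐ[volume.restrict (Metric.ball x₀ ρ₀)ᶜ] 0 :=
      (integral_eq_zero_iff_of_nonneg
        (fun y => mul_nonneg (Set.indicator_nonneg (fun _ _ => zero_le_one) y)
          (fracKernel_nonneg n s y x₀))
        (indicator_mul_fracKernel_integrableOn n s hs0 D hDm x₀ hρ₀)).mp (stepD ρ₀ hρ₀)
    have hms : MeasurableSet {y | F y ≠ 0} := hFm (measurableSet_singleton 0).compl
    have hmeas : volume.restrict (Metric.ball x₀ ρ₀)ᶜ {y | F y ≠ 0} = 0 := by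
      rw [EventuallyEq, ae_iff] at hFz
      simpa using hFz
    rw [Measure.restrict_apply hms] at hmeas
    refine measure_mono_null ?_ hmeas
    rintro y ⟨hyD, hyB⟩
    refine ⟨?_, hyB⟩
    have hd : ρ₀ ≤ dist y x₀ := by simpa [Metric.mem_ball, not_lt] using hyB
    have hker_pos : 0 < fracKernel n s y x₀ :=
      Real.rpow_pos_of_pos (lt_of_lt_of_le hρ₀ hd) _
    simp only [hF, Set.mem_setOf_eq, Set.indicator_of_mem hyD]
    positivity
  -- conclude
  haveI : Nonempty (Fin n) := Fin.pos_iff_nonempty.mp hn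
  haveI : Nontrivial (EuclideanSpace ℝ (Fin n)) := inferInstance
  have hcover : D ⊆ {x₀} ∪ ⋃ k : ℕ, D ∩ (Metric.ball x₀ (1 / (k + 1)))ᶜ := by
    intro y hy
    by_cases hyx : y = x₀
    · exact Or.inl hyx
    · right
      have hdpos : 0 < dist y x₀ := dist_pos.mpr hyx
      obtain ⟨k, hk⟩ := exists_nat_one_div_lt hdpos
      exact Set.mem_iUnion.mpr ⟨k, hy, by
        simp only [Set.mem_compl_iff, Metric.mem_ball, not_lt]
        exact_mod_cast hk.le⟩
  refine measure_mono_null hcover (measure_union_null (measure_singleton x₀) ?_)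
  refine measure_iUnion_null fun k => stepE _ ?_
  positivity


end
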